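/- arXiv:1907.01983 — 7 statements merged into one kernel-verified Lean document; each statement's English description precedes it below -/
import Mathlib

section
/- The Jacobian of the ODE system G' = G(F(S) − G), S' = φ(−L(G)S + 1) at the grass-free steady state E_S = (0,1) has eigenvalues λ₁ = (1 − e₁)/(1 + p₁) and λ₂ = −φ. Consequently E_S is linearly stable (both eigenvalues negative) if e₁ > 1 and linearly unstable (an eigenvalue positive) if e₁ < 1. -/
/-! The Jacobian at `(0, 1)` is lower triangular, because `∂G'/∂S` carries the factor `G = 0`.
Its eigenvalues are therefore its diagonal entries `F 1 = (1 - e₁) / (1 + p₁)` and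
`-φ * L 0 = -φ`. -/

open Matrix Polynomial

namespace Matrix

theorem charpoly_of_isLowerTriangular {R n : Type*} [CommRing R] [Fintype n]
    [LinearOrder n] (M : Matrix n n R) (h : M.IsLowerTriangular) :
    M.charpoly = ∏ i : n, (X - C (M i i)) := by
  rw [← charpoly_transpose]
  exact charpoly_of_isUpperTriangular Mᵀ h.transpose

theorem IsLowerTriangular.isRoot_charpoly {R n : Type*} [CommRing R] [IsDomain R] [Fintype n]
    [LinearOrder n] {M : Matrix n n R} (h : M.IsLowerTriangular) (i : n) :
    M.charpoly.IsRoot (M i i) := by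
  rw [charpoly_of_isLowerTriangular M h, IsRoot, eval_prod]
  exact Finset.prod_eq_zero (Finset.mem_univ i) (by simp)

theorem isLowerTriangular_fin_two {R : Type*} [Zero R] {M : Matrix (Fin 2) (Fin 2) R}
    (h : M 0 1 = 0) : M.IsLowerTriangular := by
  intro i j hij
  fin_cases i <;> fin_cases j <;> first | exact h | exact absurd hij (by decide)

end Matrix

theorem hasDerivAt_mul_sub_self (c x : ℝ) : HasDerivAt (fun y => y * (c - y)) (c - 2 * x) x :=
  ((hasDerivAt_id' x).fun_mul ((hasDerivAt_const x c).fun_sub (hasDerivAt_id' x))).congr_deriv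
    (by ring)

theorem grass_free_state_eigenvalues_general (e₁ p₁ e₃ φ δ : ℝ)
    (hp₁ : 0 < p₁) (he₃ : 0 < e₃) (hφ : 0 < φ) :
    let F : ℝ → ℝ := fun S => (S - e₁) / (S + p₁)
    let L : ℝ → ℝ := fun G => (δ * G + e₃) / (G + e₃)
    let J : Matrix (Fin 2) (Fin 2) ℝ :=
      !![deriv (fun G => G * (F 1 - G)) 0,
         deriv (fun S => (0 : ℝ) * (F S - 0)) 1;
         deriv (fun G => φ * (-(L G) * 1 + 1)) 0,
         deriv (fun S => φ * (-(L 0) * S + 1)) 1]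
    (J.charpoly.IsRoot ((1 - e₁) / (1 + p₁)) ∧ J.charpoly.IsRoot (-φ)) ∧
    (1 < e₁ → (1 - e₁) / (1 + p₁) < 0 ∧ -φ < 0) ∧
    (e₁ < 1 → 0 < (1 - e₁) / (1 + p₁)) := by
  intro F L J
  have hJ : J.IsLowerTriangular := isLowerTriangular_fin_two (by simp [J])
  have hJ₀₀ : J 0 0 = (1 - e₁) / (1 + p₁) := by
    change deriv (fun G => G * (F 1 - G)) 0 = _
    rw [(hasDerivAt_mul_sub_self (F 1) 0).deriv]
    simp [F, add_comm]
  have hJ₁₁ : J 1 1 = -φ := by simp [J, L, he₃.ne']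
  have hp : 0 < 1 + p₁ := by linarith
  exact ⟨⟨hJ₀₀ ▸ hJ.isRoot_charpoly 0, hJ₁₁ ▸ hJ.isRoot_charpoly 1⟩,
    fun he => ⟨div_neg_of_neg_of_pos (by linarith) hp, by linarith⟩,
    fun he => div_pos (by linarith) hp⟩

/-- Eigenvalues of the Jacobian at the grass-free steady state `(0,1)` and its linear
(in)stability. -/
theorem grass_free_state_eigenvalues (e₁ p₁ e₃ φ δ : ℝ)
    (he₁ : 0 < e₁) (hp₁ : 0 < p₁) (he₃ : 0 < e₃) (hφ : 0 < φ)
    (hδ : 0 < δ) (hδ1 : δ < 1) :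
    let F : ℝ → ℝ := fun S => (S - e₁) / (S + p₁)
    let L : ℝ → ℝ := fun G => (δ * G + e₃) / (G + e₃)
    let J : Matrix (Fin 2) (Fin 2) ℝ :=
      !![deriv (fun G => G * (F 1 - G)) 0,
         deriv (fun S => (0 : ℝ) * (F S - 0)) 1;
         deriv (fun G => φ * (-(L G) * 1 + 1)) 0,
         deriv (fun S => φ * (-(L 0) * S + 1)) 1]
    (J.charpoly.IsRoot ((1 - e₁) / (1 + p₁)) ∧ J.charpoly.IsRoot (-φ)) ∧
    (1 < e₁ → (1 - e₁) / (1 + p₁) < 0 ∧ -φ < 0) ∧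
    (e₁ < 1 → 0 < (1 - e₁) / (1 + p₁)) :=
  grass_free_state_eigenvalues_general e₁ p₁ e₃ φ δ hp₁ he₃ hφ
end

section
/- If B + δ < 0, then the value e₁* = K(G̃₊) of K at its positive critical point is strictly greater than 1, and e₁* equals [2e₃A(δ² + Bδ − Ae₃) + (2Ae₃ − Bδ)√(A²e₃² − Ae₃δ(B + δ))]/(δ²√(A²e₃² − Ae₃δ(B + δ))). -/
/-!
Put `x = A e₃`, `y = A e₃ - δ (B + δ)` and `s = δ G̃₊ + e₃`, so that `A² s² = x y` by the
definition of `G̃₊`. Substituting into `K` collapses it to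
`K(G̃₊) = 1 + (x + y - 2 √(x y)) / δ² = 1 + (√y - √x)² / δ²`.
Since `B + δ < 0` we have `x < y`, so strict AM-GM gives `e₁* > 1`.
-/

lemma two_mul_lt_add_of_sq_eq_mul {x y r : ℝ} (hx : 0 ≤ x) (hy : 0 ≤ y) (hxy : x ≠ y)
    (hr : r ^ 2 = x * y) : 2 * r < x + y := by
  have hsq : 0 < (x - y) ^ 2 := by positivity [sub_ne_zero.2 hxy]
  nlinarith

lemma value_at_critical_point_eq {A B δ e₃ s : ℝ} (hδ : δ ≠ 0) (hs : s ≠ 0)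
    (hs_sq : A * s ^ 2 = A * e₃ ^ 2 - e₃ * δ * (B + δ)) :
    let G := (-e₃ + s) / δ
    (e₃ - B * G - A * G ^ 2) / (δ * G + e₃) =
      1 + (A * e₃ + (A * e₃ - δ * (B + δ)) - 2 * (A * s)) / δ ^ 2 := by
  intro G
  have hG : δ * G = s - e₃ := by simp only [G]; field_simp; ring
  rw [show δ * G + e₃ = s by linarith, div_eq_iff hs]
  field_simp
  linear_combination (-(B * δ) - A * (δ * G + s - e₃)) * hG + hs_sq

theorem saddle_node_value_general (A B δ e₃ : ℝ) (hA : 0 < A) (he₃ : 0 < e₃)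
    (hδ : 0 < δ) (hBδ : B + δ < 0) :
    let K : ℝ → ℝ := fun G => (e₃ - B * G - A * G ^ 2) / (δ * G + e₃)
    let Gp : ℝ := (-e₃ + Real.sqrt (e₃ ^ 2 - e₃ * δ * (B + δ) / A)) / δ
    1 < K Gp ∧
      K Gp = (2 * e₃ * A * (δ ^ 2 + B * δ - A * e₃) +
        (2 * A * e₃ - B * δ) * Real.sqrt (A ^ 2 * e₃ ^ 2 - A * e₃ * δ * (B + δ))) /
        (δ ^ 2 * Real.sqrt (A ^ 2 * e₃ ^ 2 - A * e₃ * δ * (B + δ))) := by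
  intro K Gp
  set s := Real.sqrt (e₃ ^ 2 - e₃ * δ * (B + δ) / A)
  have hx : 0 < A * e₃ := mul_pos hA he₃
  have hshift : 0 < δ * -(B + δ) := mul_pos hδ (neg_pos.2 hBδ)
  have hrad : 0 < e₃ ^ 2 - e₃ * δ * (B + δ) / A := by
    have : e₃ * δ * (B + δ) / A < 0 := div_neg_of_neg_of_pos (by nlinarith) hA
    nlinarith
  have hs_pos : 0 < s := Real.sqrt_pos.2 hrad
  have hs_sq : A * s ^ 2 = A * e₃ ^ 2 - e₃ * δ * (B + δ) := by
    rw [Real.sq_sqrt hrad.le]; field_simp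
  have hAs_sq : (A * s) ^ 2 = A * e₃ * (A * e₃ - δ * (B + δ)) := by
    linear_combination A * hs_sq
  have hroot : Real.sqrt (A ^ 2 * e₃ ^ 2 - A * e₃ * δ * (B + δ)) = A * s := by
    rw [← Real.sqrt_sq (by positivity : 0 ≤ A * s), hAs_sq]; ring_nf
  have hK : K Gp = 1 + (A * e₃ + (A * e₃ - δ * (B + δ)) - 2 * (A * s)) / δ ^ 2 :=
    value_at_critical_point_eq hδ.ne' hs_pos.ne' hs_sq
  refine ⟨?_, ?_⟩
  · rw [hK, lt_add_iff_pos_right]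
    have hamgm := two_mul_lt_add_of_sq_eq_mul hx.le (by linarith) (by linarith) hAs_sq
    exact div_pos (by linarith) (by positivity)
  · rw [hK, hroot, eq_div_iff (by positivity)]
    field_simp
    linear_combination (-2) * hs_sq

/-- The saddle-node bifurcation value `e₁* = K(G̃₊)` exceeds `1` and has the stated
closed form. -/
theorem saddle_node_value (A B δ e₃ : ℝ) (hA : 0 < A) (he₃ : 0 < e₃)
    (hδ : 0 < δ) (hδ1 : δ < 1) (hBδ : B + δ < 0) :
    let K : ℝ → ℝ := fun G => (e₃ - B * G - A * G ^ 2) / (δ * G + e₃)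
    let Gp : ℝ := (-e₃ + Real.sqrt (e₃ ^ 2 - e₃ * δ * (B + δ) / A)) / δ
    1 < K Gp ∧
      K Gp = (2 * e₃ * A * (δ ^ 2 + B * δ - A * e₃) +
        (2 * A * e₃ - B * δ) * Real.sqrt (A ^ 2 * e₃ ^ 2 - A * e₃ * δ * (B + δ))) /
        (δ ^ 2 * Real.sqrt (A ^ 2 * e₃ ^ 2 - A * e₃ * δ * (B + δ))) :=
  saddle_node_value_general A B δ e₃ hA he₃ hδ hBδ
end

section
/- If B + δ < 0 and 1 < e₁ < e₁* := K(G̃₊), then the equation K(G) = e₁ has exactly two positive solutions G₋* < G₊*, given by G₊,₋* = (−(e₁δ + B) ± √((e₁δ + B)² − 4Ae₃(e₁ − 1)))/(2A). -/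
/-!
For `G > 0` the denominator `δ G + e₃` is positive, so `K G = e₁` is the quadratic equation
`A G² + (e₁ δ + B) G + e₃ (e₁ - 1) = 0`, and `e₁ < K G` says that this quadratic is negative at `G`.
Its constant term is positive because `e₁ > 1`, and `B + δ < 0` makes `G̃₊` positive, so the
hypothesis `e₁ < K G̃₊` gives a positive point where the quadratic is negative. An upward parabola
that is positive at `0` and negative somewhere on `(0, ∞)` has two distinct positive roots, and the
quadratic formula gives them.
-/

section Quadratic

variable {a b c x : ℝ}

theorem discrim_pos_of_quadratic_neg (ha : 0 < a) (hx : a * (x * x) + b * x + c < 0) :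
    0 < discrim a b c := by
  have hsq : discrim a b c = (2 * a * x + b) ^ 2 - 4 * a * (a * (x * x) + b * x + c) := by
    unfold discrim; ring
  rw [hsq]
  nlinarith [sq_nonneg (2 * a * x + b), mul_pos ha (neg_pos.2 hx)]

theorem linear_coeff_neg_of_quadratic_neg (ha : 0 ≤ a) (hc : 0 < c) (hx : 0 < x)
    (hq : a * (x * x) + b * x + c < 0) : b < 0 := by
  by_contra! hb
  nlinarith [mul_nonneg ha (mul_self_nonneg x), mul_nonneg hb hx.le]

theorem sqrt_discrim_lt_neg (ha : 0 < a) (hc : 0 < c) (hb : b < 0) :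
    √(discrim a b c) < -b := by
  rw [Real.sqrt_lt' (by linarith)]
  unfold discrim
  nlinarith [mul_pos ha hc]

theorem quadratic_two_pos_roots (ha : 0 < a) (hc : 0 < c) (hx : 0 < x)
    (hq : a * (x * x) + b * x + c < 0) :
    0 < (-b - √(discrim a b c)) / (2 * a) ∧
      (-b - √(discrim a b c)) / (2 * a) < (-b + √(discrim a b c)) / (2 * a) ∧
      ∀ y, a * (y * y) + b * y + c = 0 ↔
        y = (-b + √(discrim a b c)) / (2 * a) ∨ y = (-b - √(discrim a b c)) / (2 * a) := by
  have hD := discrim_pos_of_quadratic_neg ha hq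
  have hs := sqrt_discrim_lt_neg ha hc (linear_coeff_neg_of_quadratic_neg ha.le hc hx hq)
  have hs0 := Real.sqrt_pos.2 hD
  exact ⟨div_pos (by linarith) (by linarith), div_lt_div_of_pos_right (by linarith) (by linarith),
    quadratic_eq_zero_iff ha.ne' (Real.mul_self_sqrt hD.le).symm⟩

end Quadratic

section RatioEquation

variable {e₃ δ e₁ A B G : ℝ}

theorem ratio_eq_iff_quadratic_eq_zero (hd : 0 < δ * G + e₃) :
    (e₃ - B * G - A * G ^ 2) / (δ * G + e₃) = e₁ ↔
      A * (G * G) + (e₁ * δ + B) * G + e₃ * (e₁ - 1) = 0 := by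
  rw [div_eq_iff hd.ne']
  constructor <;> intro h <;> linear_combination -h

theorem lt_ratio_iff_quadratic_neg (hd : 0 < δ * G + e₃) :
    e₁ < (e₃ - B * G - A * G ^ 2) / (δ * G + e₃) ↔
      A * (G * G) + (e₁ * δ + B) * G + e₃ * (e₁ - 1) < 0 := by
  rw [lt_div_iff₀ hd]
  constructor <;> intro h <;> linarith

theorem critical_point_pos (hA : 0 < A) (he₃ : 0 < e₃) (hδ : 0 < δ) (hBδ : B + δ < 0) :
    0 < (-e₃ + √(e₃ ^ 2 - e₃ * δ * (B + δ) / A)) / δ := by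
  have hgap : e₃ * δ * (B + δ) / A < 0 :=
    div_neg_of_neg_of_pos (mul_neg_of_pos_of_neg (by positivity) hBδ) hA
  have hlt : e₃ < √(e₃ ^ 2 - e₃ * δ * (B + δ) / A) := (Real.lt_sqrt he₃.le).2 (by linarith)
  exact div_pos (by linarith) hδ

end RatioEquation

theorem K_two_positive_solutions_general (p₁ e₃ δ e₁ A B : ℝ)
    (hp₁ : 0 < p₁) (he₃ : 0 < e₃) (hδ : 0 < δ)
    (hA : A = 1 + p₁ * δ) (hBδ : B + δ < 0) :
    let K : ℝ → ℝ := fun G => (e₃ - B * G - A * G ^ 2) / (δ * G + e₃)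
    let Gtilde : ℝ := (-e₃ + Real.sqrt (e₃ ^ 2 - e₃ * δ * (B + δ) / A)) / δ
    let C : ℝ := Real.sqrt ((e₁ * δ + B) ^ 2 - 4 * A * e₃ * (e₁ - 1))
    let Gp : ℝ := (-(e₁ * δ + B) + C) / (2 * A)
    let Gm : ℝ := (-(e₁ * δ + B) - C) / (2 * A)
    1 < e₁ → e₁ < K Gtilde →
      0 < Gm ∧ Gm < Gp ∧ K Gm = e₁ ∧ K Gp = e₁ ∧
        ∀ G : ℝ, 0 < G → K G = e₁ → G = Gm ∨ G = Gp := by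
  intro K Gtilde C Gp Gm he₁ hK
  have hA0 : 0 < A := by rw [hA]; positivity
  have hc : 0 < e₃ * (e₁ - 1) := mul_pos he₃ (by linarith)
  have hden : ∀ G, 0 < G → 0 < δ * G + e₃ := fun G hG => by positivity
  have hGt : 0 < Gtilde := critical_point_pos hA0 he₃ hδ hBδ
  have hC : C = √(discrim A (e₁ * δ + B) (e₃ * (e₁ - 1))) := by
    simp only [C, discrim]; ring_nf
  obtain ⟨hGm, hlt, hroots⟩ :=
    quadratic_two_pos_roots hA0 hc hGt ((lt_ratio_iff_quadratic_neg (hden _ hGt)).1 hK)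
  rw [← hC] at hGm hlt hroots
  have hsol : ∀ G, 0 < G → (K G = e₁ ↔ G = Gp ∨ G = Gm) := fun G hG =>
    (ratio_eq_iff_quadratic_eq_zero (hden G hG)).trans (hroots G)
  exact ⟨hGm, hlt, (hsol Gm hGm).2 (Or.inr rfl), (hsol Gp (hGm.trans hlt)).2 (Or.inl rfl),
    fun G hG hKG => ((hsol G hG).1 hKG).symm⟩

/-- Case I: for `1 < e₁ < e₁*` the equation `K(G) = e₁` has exactly two positive
solutions, given explicitly. -/
theorem K_two_positive_solutions (p₁ e₃ δ e₁ A B : ℝ)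
    (hp₁ : 0 < p₁) (he₃ : 0 < e₃) (hδ : 0 < δ) (hδ1 : δ < 1)
    (hA : A = 1 + p₁ * δ) (hB : B = -1 + e₃ + p₁ * e₃) (hBδ : B + δ < 0) :
    let K : ℝ → ℝ := fun G => (e₃ - B * G - A * G ^ 2) / (δ * G + e₃)
    let Gtilde : ℝ := (-e₃ + Real.sqrt (e₃ ^ 2 - e₃ * δ * (B + δ) / A)) / δ
    let C : ℝ := Real.sqrt ((e₁ * δ + B) ^ 2 - 4 * A * e₃ * (e₁ - 1))
    let Gp : ℝ := (-(e₁ * δ + B) + C) / (2 * A)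
    let Gm : ℝ := (-(e₁ * δ + B) - C) / (2 * A)
    1 < e₁ → e₁ < K Gtilde →
      0 < Gm ∧ Gm < Gp ∧ K Gm = e₁ ∧ K Gp = e₁ ∧
        ∀ G : ℝ, 0 < G → K G = e₁ → G = Gm ∨ G = Gp :=
  K_two_positive_solutions_general p₁ e₃ δ e₁ A B hp₁ he₃ hδ hA hBδ
end

section
/- Suppose B + δ < 0 and 1 < e₁ < e₁*, and let C = √((e₁δ + B)² − 4Ae₃(e₁ − 1)) > 0, G₊* = (−(e₁δ + B) + C)/(2A). Then K'(G₊*) < 0. -/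
/-!
The numerator of `K'(G)` is `-(A δ G² + 2 A e₃ G + (B + δ) e₃)`, whose sign cannot be read off
the coefficients. At the upper root `G₊*` of `A G² + (e₁ δ + B) G + e₃ (e₁ - 1)` we have
`2 A G₊* = -(e₁ δ + B) + C`, and eliminating `G₊*` turns `2 A` times the bracket into
`C (δ C + 2 A e₃ - δ (e₁ δ + B))`, a product of positive factors when `0 < C < -(e₁ δ + B)`.
-/

theorem hasDerivAt_quadratic_div_linear (A B δ e₃ G : ℝ) (hG : δ * G + e₃ ≠ 0) :
    HasDerivAt (fun G => (e₃ - B * G - A * G ^ 2) / (δ * G + e₃))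
      (-(A * δ * G ^ 2 + 2 * A * e₃ * G + (B + δ) * e₃) / (δ * G + e₃) ^ 2) G := by
  have hnum : HasDerivAt (fun G : ℝ => e₃ - B * G - A * G ^ 2) (-B - 2 * A * G) G := by
    refine (((hasDerivAt_const G e₃).sub ((hasDerivAt_id G).const_mul B)).sub
      ((hasDerivAt_pow 2 G).const_mul A)).congr_deriv ?_
    push_cast
    ring
  have hden : HasDerivAt (fun G : ℝ => δ * G + e₃) δ G := by
    simpa using ((hasDerivAt_id G).const_mul δ).add_const e₃
  exact (hnum.div hden hG).congr_deriv (by ring)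

theorem upper_root_mul_slope_numerator {A B δ e₃ e₁ C G : ℝ}
    (hC : C ^ 2 = (e₁ * δ + B) ^ 2 - 4 * A * e₃ * (e₁ - 1))
    (hG : 2 * A * G = -(e₁ * δ + B) + C) :
    2 * A * (A * δ * G ^ 2 + 2 * A * e₃ * G + (B + δ) * e₃)
      = C * (δ * C + 2 * A * e₃ - δ * (e₁ * δ + B)) := by
  linear_combination (δ / 2 * (2 * A * G) + δ / 2 * (-(e₁ * δ + B) + C) + 2 * A * e₃) * hG
    - δ / 2 * hC

theorem slope_numerator_pos_of_upper_root {A B δ e₃ e₁ C G : ℝ}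
    (hA : 0 < A) (he₃ : 0 < e₃) (hδ : 0 < δ) (hC₀ : 0 < C) (hC_lt : C < -(e₁ * δ) - B)
    (hC : C ^ 2 = (e₁ * δ + B) ^ 2 - 4 * A * e₃ * (e₁ - 1))
    (hG : 2 * A * G = -(e₁ * δ + B) + C) :
    0 < A * δ * G ^ 2 + 2 * A * e₃ * G + (B + δ) * e₃ := by
  have hs : 0 < -(e₁ * δ + B) := by linarith
  have hprod : 0 < C * (δ * C + 2 * A * e₃ - δ * (e₁ * δ + B)) := by
    apply mul_pos hC₀
    linarith [mul_pos hδ hC₀, mul_pos hA he₃, mul_pos hδ hs]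
  rw [← upper_root_mul_slope_numerator hC hG] at hprod
  exact pos_of_mul_pos_right hprod (by positivity)

theorem K_deriv_neg_at_upper_branch_general (A B δ e₃ e₁ : ℝ)
    (hA : 0 < A) (he₃ : 0 < e₃) (hδ : 0 < δ) :
    let C : ℝ := Real.sqrt ((e₁ * δ + B) ^ 2 - 4 * A * e₃ * (e₁ - 1))
    let Gp : ℝ := (-(e₁ * δ + B) + C) / (2 * A)
    let K : ℝ → ℝ := fun G => (e₃ - B * G - A * G ^ 2) / (δ * G + e₃)
    0 < C → C < -(e₁ * δ) - B → (e₁ * δ + B) ^ 2 > 4 * A * e₃ * (e₁ - 1) →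
      deriv K Gp < 0 := by
  intro C Gp K hC₀ hC_lt hdisc
  have hC : C ^ 2 = (e₁ * δ + B) ^ 2 - 4 * A * e₃ * (e₁ - 1) :=
    Real.sq_sqrt (sub_pos.2 hdisc).le
  have hGp : 2 * A * Gp = -(e₁ * δ + B) + C := mul_div_cancel₀ _ (by positivity)
  have hGp_pos : 0 < Gp := div_pos (by linarith) (by positivity)
  have hden : 0 < δ * Gp + e₃ := by positivity
  rw [(hasDerivAt_quadratic_div_linear A B δ e₃ Gp hden.ne').deriv]
  exact div_neg_of_neg_of_pos
    (neg_neg_of_pos (slope_numerator_pos_of_upper_root hA he₃ hδ hC₀ hC_lt hC hGp))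
    (by positivity)

/-- At the upper steady-state branch `G₊*`, the slope of `K` is negative. -/
theorem K_deriv_neg_at_upper_branch (A B δ e₃ e₁ : ℝ)
    (hA : 0 < A) (he₃ : 0 < e₃) (hδ : 0 < δ) (hδ1 : δ < 1)
    (hBδ : B + δ < 0) (he₁ : 1 < e₁) :
    let C : ℝ := Real.sqrt ((e₁ * δ + B) ^ 2 - 4 * A * e₃ * (e₁ - 1))
    let Gp : ℝ := (-(e₁ * δ + B) + C) / (2 * A)
    let K : ℝ → ℝ := fun G => (e₃ - B * G - A * G ^ 2) / (δ * G + e₃)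
    0 < C → C < -(e₁ * δ) - B → (e₁ * δ + B) ^ 2 > 4 * A * e₃ * (e₁ - 1) →
      deriv K Gp < 0 :=
  K_deriv_neg_at_upper_branch_general A B δ e₃ e₁ hA he₃ hδ
end

section
/- Suppose B + δ < 0 and 1 < e₁ < e₁*, and let C = √((e₁δ + B)² − 4Ae₃(e₁ − 1)) > 0, G₋* = (−(e₁δ + B) − C)/(2A). Then K'(G₋*) > 0. -/
/-!
`G₋*` is the smaller root of `A G² + (e₁δ + B) G + e₃(e₁ - 1)`, and at any root of this quadratic
the numerator `e₃ - BG - AG²` of `K` equals `e₁ (δG + e₃)`, i.e. `K(G₋*) = e₁`. The quotient rule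
then collapses to `K'(G₋*) = (-B - 2AG₋* - e₁δ) / (δG₋* + e₃) = C / (δG₋* + e₃)`, which is positive
because `G₋* > 0`.
-/

theorem HasDerivAt.fun_div_of_eq_mul {𝕜 𝕜' : Type*} [NontriviallyNormedField 𝕜]
    [NontriviallyNormedField 𝕜'] [NormedAlgebra 𝕜 𝕜'] {c d : 𝕜 → 𝕜'} {c' d' k : 𝕜'} {x : 𝕜}
    (hc : HasDerivAt c c' x) (hd : HasDerivAt d d' x) (hx : d x ≠ 0) (hk : c x = k * d x) :
    HasDerivAt (fun y => c y / d y) ((c' - k * d') / d x) x := by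
  convert hc.fun_div hd hx using 1
  rw [hk]
  field_simp

theorem quadratic_eq_zero_at_sub_sqrt_discrim {a b c : ℝ} (ha : a ≠ 0) (h : 0 ≤ discrim a b c) :
    let x := (-b - √(discrim a b c)) / (2 * a)
    a * (x * x) + b * x + c = 0 :=
  (quadratic_eq_zero_iff ha (Real.mul_self_sqrt h).symm _).2 (Or.inr rfl)

theorem hasDerivAt_quadratic_numerator (A B e₃ x : ℝ) :
    HasDerivAt (fun G => e₃ - B * G - A * G ^ 2) (-B - 2 * A * x) x := by
  refine (((hasDerivAt_const x e₃).fun_sub ((hasDerivAt_id' x).const_mul B)).fun_sub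
    ((hasDerivAt_pow 2 x).const_mul A)).congr_deriv ?_
  ring

theorem hasDerivAt_affine_denominator (δ e₃ x : ℝ) :
    HasDerivAt (fun G => δ * G + e₃) δ x := by
  simpa using ((hasDerivAt_id x).const_mul δ).add_const e₃

theorem numerator_eq_mul_denominator_of_root {A B δ e₃ e₁ G : ℝ}
    (hG : A * (G * G) + (e₁ * δ + B) * G + e₃ * (e₁ - 1) = 0) :
    e₃ - B * G - A * G ^ 2 = e₁ * (δ * G + e₃) := by
  linear_combination -hG

theorem K_deriv_pos_at_lower_branch_general (A B δ e₃ e₁ : ℝ)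
    (hA : 0 < A) (he₃ : 0 < e₃) (hδ : 0 < δ) :
    let C : ℝ := Real.sqrt ((e₁ * δ + B) ^ 2 - 4 * A * e₃ * (e₁ - 1))
    let Gm : ℝ := (-(e₁ * δ + B) - C) / (2 * A)
    let K : ℝ → ℝ := fun G => (e₃ - B * G - A * G ^ 2) / (δ * G + e₃)
    0 < C → C < -(e₁ * δ) - B → (e₁ * δ + B) ^ 2 > 4 * A * e₃ * (e₁ - 1) →
      0 < deriv K Gm := by
  intro C Gm K hC hCB hdisc
  have hdiscrim : discrim A (e₁ * δ + B) (e₃ * (e₁ - 1)) =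
      (e₁ * δ + B) ^ 2 - 4 * A * e₃ * (e₁ - 1) := by
    rw [discrim]; ring
  have hroot : A * (Gm * Gm) + (e₁ * δ + B) * Gm + e₃ * (e₁ - 1) = 0 := by
    have := quadratic_eq_zero_at_sub_sqrt_discrim hA.ne' (b := e₁ * δ + B) (c := e₃ * (e₁ - 1))
      (by rw [hdiscrim]; linarith)
    rwa [hdiscrim] at this
  have hGm : 0 < Gm := div_pos (by linarith) (by positivity)
  have hD : 0 < δ * Gm + e₃ := by positivity
  have hK : HasDerivAt K (C / (δ * Gm + e₃)) Gm := by
    refine ((hasDerivAt_quadratic_numerator A B e₃ Gm).fun_div_of_eq_mul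
      (hasDerivAt_affine_denominator δ e₃ Gm) hD.ne'
      (numerator_eq_mul_denominator_of_root hroot)).congr_deriv ?_
    have h2AGm : 2 * A * Gm = -(e₁ * δ + B) - C := mul_div_cancel₀ _ (by positivity)
    congr 1
    linarith
  rw [hK.deriv]
  positivity

/-- At the lower steady-state branch `G₋*`, the slope of `K` is positive. -/
theorem K_deriv_pos_at_lower_branch (A B δ e₃ e₁ : ℝ)
    (hA : 0 < A) (he₃ : 0 < e₃) (hδ : 0 < δ) (hδ1 : δ < 1)
    (hBδ : B + δ < 0) (he₁ : 1 < e₁) :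
    let C : ℝ := Real.sqrt ((e₁ * δ + B) ^ 2 - 4 * A * e₃ * (e₁ - 1))
    let Gm : ℝ := (-(e₁ * δ + B) - C) / (2 * A)
    let K : ℝ → ℝ := fun G => (e₃ - B * G - A * G ^ 2) / (δ * G + e₃)
    0 < C → C < -(e₁ * δ) - B → (e₁ * δ + B) ^ 2 > 4 * A * e₃ * (e₁ - 1) →
      0 < deriv K Gm :=
  K_deriv_pos_at_lower_branch_general A B δ e₃ e₁ hA he₃ hδ
end

section
/- At a positive coexistence steady state (G*, S*) with S* = 1/L(G*) and G* = F(S*), the determinant of the Jacobian of the ODE system satisfies Det J = φG*·(−K'(G*)L(G*)²)/(1 + L(G*)p₁). Hence Det J > 0 if and only if K'(G*) < 0. -/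
/-!
At a steady state `G = F(S)` of `F(S) = (S - e₁)/(S + p₁)` one has `p₁ + e₁ = (1 - G)(S + p₁)`,
so `F'(S) = (1 - G)/(S + p₁)`; with `S = 1/L(G)` this is `(1 - G) L / (1 + L p₁)`.
Substituting into `det J = φ G (L + F'(S) L'/L)` and comparing with
`-K' L² = L + (1 - G) L' + p₁ L²` gives the identity, for any differentiable `L` with
`L(G) ≠ 0`. Since `φ G L² / (1 + L p₁) > 0`, the sign of `det J` is that of `-K'(G)`.
-/

lemma hasDerivAt_sub_div_add_of_eq {e p S G : ℝ} (hS : S + p ≠ 0) (hG : (S - e) / (S + p) = G) :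
    HasDerivAt (fun s => (s - e) / (s + p)) ((1 - G) / (S + p)) S := by
  have h := ((hasDerivAt_id S).sub_const e).div ((hasDerivAt_id S).add_const p) hS
  refine h.congr_deriv ?_
  subst hG
  simp only [id]
  field_simp

lemma hasDerivAt_one_sub_div_sub_mul {L : ℝ → ℝ} {L' p G : ℝ} (hL : HasDerivAt L L' G)
    (hLG : L G ≠ 0) :
    HasDerivAt (fun g => (1 - g) / L g - p * g) ((-L G - (1 - G) * L') / L G ^ 2 - p) G := by
  have h := (((hasDerivAt_id G).const_sub 1).div hL hLG).sub ((hasDerivAt_id G).const_mul p)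
  exact h.congr_deriv (by simp)

lemma jacobian_det_eq {φ G p l l' : ℝ} (hl : l ≠ 0) (hlp : 1 + l * p ≠ 0) :
    (-G) * (-φ * l) - (G * ((1 - G) / (1 / l + p))) * (-φ * l' / l) =
      φ * G * (-((-l - (1 - G) * l') / l ^ 2 - p) * l ^ 2 / (1 + l * p)) := by
  have hS : 1 / l + p = (1 + l * p) / l := by field_simp
  rw [hS]
  field_simp
  ring

lemma pos_mul_neg_mul_div_iff {c k m d : ℝ} (hc : 0 < c) (hm : 0 < m) (hd : 0 < d) :
    0 < c * (-k * m / d) ↔ k < 0 := by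
  rw [show c * (-k * m / d) = c * m / d * -k by ring, mul_pos_iff_of_pos_left (by positivity),
    neg_pos]

theorem det_jacobian_coexistence_general (e₁ p₁ e₃ φ δ G : ℝ)
    (hp₁ : 0 < p₁) (he₃ : 0 < e₃) (hφ : 0 < φ)
    (hδ : 0 < δ) (hG : 0 < G) :
    let F : ℝ → ℝ := fun S => (S - e₁) / (S + p₁)
    let L : ℝ → ℝ := fun G => (δ * G + e₃) / (G + e₃)
    let K : ℝ → ℝ := fun G => (1 - G) / L G - p₁ * G
    let detJ : ℝ := (-G) * (-φ * L G) -
      (G * deriv F (1 / L G)) * (-φ * deriv L G / L G)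
    F (1 / L G) = G →
      detJ = φ * G * (-(deriv K G) * (L G) ^ 2 / (1 + L G * p₁)) ∧
        (0 < detJ ↔ deriv K G < 0) := by
  intro F L K detJ hF
  have hL : 0 < L G := by positivity
  have hLd : HasDerivAt L (deriv L G) G :=
    ((differentiableAt_id.const_mul δ |>.add_const e₃).div (differentiableAt_id.add_const e₃)
      (by positivity)).hasDerivAt
  have hF' : deriv F (1 / L G) = (1 - G) / (1 / L G + p₁) :=
    (hasDerivAt_sub_div_add_of_eq (by positivity) hF).deriv
  have hK' : deriv K G = (-L G - (1 - G) * deriv L G) / L G ^ 2 - p₁ :=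
    (hasDerivAt_one_sub_div_sub_mul hLd hL.ne').deriv
  have hdet : detJ = φ * G * (-(deriv K G) * (L G) ^ 2 / (1 + L G * p₁)) := by
    simp only [detJ, hF', hK']
    exact jacobian_det_eq hL.ne' (by positivity)
  exact ⟨hdet, hdet ▸ pos_mul_neg_mul_div_iff (by positivity) (by positivity) (by positivity)⟩

/-- Determinant of the Jacobian at a positive coexistence steady state in terms of
`K'(G*)`; positivity of the determinant is equivalent to `K'(G*) < 0`. -/
theorem det_jacobian_coexistence (e₁ p₁ e₃ φ δ G : ℝ)
    (he₁ : 0 < e₁) (hp₁ : 0 < p₁) (he₃ : 0 < e₃) (hφ : 0 < φ)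
    (hδ : 0 < δ) (hδ1 : δ < 1) (hG : 0 < G) :
    let F : ℝ → ℝ := fun S => (S - e₁) / (S + p₁)
    let L : ℝ → ℝ := fun G => (δ * G + e₃) / (G + e₃)
    let K : ℝ → ℝ := fun G => (1 - G) / L G - p₁ * G
    let detJ : ℝ := (-G) * (-φ * L G) -
      (G * deriv F (1 / L G)) * (-φ * deriv L G / L G)
    F (1 / L G) = G →
      detJ = φ * G * (-(deriv K G) * (L G) ^ 2 / (1 + L G * p₁)) ∧
        (0 < detJ ↔ deriv K G < 0) :=
  det_jacobian_coexistence_general e₁ p₁ e₃ φ δ G hp₁ he₃ hφ hδ hG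
end

section
/- At any positive coexistence steady state (G*, S*), the trace of the Jacobian, Tr J = −G* − φL(G*), is strictly negative; consequently no Hopf bifurcation (purely imaginary eigenvalue pair) can occur from a positive steady state. -/
open Matrix Polynomial

/-! A purely imaginary eigenvalue `I b` of a real `2 × 2` matrix with `b ≠ 0` forces its trace
to vanish, since the imaginary part of `(I b)² - tr · I b + det` is `-b · tr`. At a positive
steady state the trace `-G - φ L(G)` is negative, so no such eigenvalue exists. -/

theorem Matrix.trace_eq_zero_of_isRoot_charpoly_I_mul {n : Type*} [Fintype n] [DecidableEq n]
    (hn : Fintype.card n = 2) {A : Matrix n n ℝ} {b : ℝ} (hb : b ≠ 0)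
    (h : (A.map ((↑) : ℝ → ℂ)).charpoly.IsRoot (Complex.I * b)) : A.trace = 0 := by
  have htrace : (A.map ((↑) : ℝ → ℂ)).trace = A.trace :=
    (AddMonoidHom.map_trace Complex.ofRealHom A).symm
  have hdet : (A.map ((↑) : ℝ → ℂ)).det = A.det := (Complex.ofRealHom.map_det A).symm
  rw [IsRoot, charpoly_of_card_eq_two (M := A.map _) hn, htrace, hdet] at h
  simpa [Complex.mul_im, pow_two, hb] using congrArg Complex.im h

theorem no_hopf_bifurcation_general (e₁ p₁ e₃ φ δ G : ℝ)
    (he₃ : 0 < e₃) (hφ : 0 < φ)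
    (hδ : 0 < δ) (hG : 0 < G) :
    let F : ℝ → ℝ := fun S => (S - e₁) / (S + p₁)
    let L : ℝ → ℝ := fun G => (δ * G + e₃) / (G + e₃)
    let J : Matrix (Fin 2) (Fin 2) ℝ :=
      !![-G, G * deriv F (1 / L G);
         -φ * deriv L G / L G, -φ * L G]
    (-G - φ * L G < 0) ∧
      ∀ b : ℝ, b ≠ 0 →
        ¬((J.map (fun x : ℝ => (x : ℂ))).charpoly.IsRoot (Complex.I * b)) := by
  intro F L J
  have hL : 0 < L G := by positivity
  have htrace_neg : -G - φ * L G < 0 := by linarith [mul_pos hφ hL]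
  have htrace : J.trace = -G - φ * L G := by simp [J, trace_fin_two, sub_eq_add_neg]
  refine ⟨htrace_neg, fun b hb hroot => htrace_neg.ne ?_⟩
  exact htrace ▸ trace_eq_zero_of_isRoot_charpoly_I_mul (Fintype.card_fin 2) hb hroot

/-- The trace of the Jacobian at a positive steady state is negative, hence the Jacobian
has no nonzero purely imaginary eigenvalue (no Hopf bifurcation). -/
theorem no_hopf_bifurcation (e₁ p₁ e₃ φ δ G : ℝ)
    (he₁ : 0 < e₁) (hp₁ : 0 < p₁) (he₃ : 0 < e₃) (hφ : 0 < φ)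
    (hδ : 0 < δ) (hδ1 : δ < 1) (hG : 0 < G) :
    let F : ℝ → ℝ := fun S => (S - e₁) / (S + p₁)
    let L : ℝ → ℝ := fun G => (δ * G + e₃) / (G + e₃)
    let J : Matrix (Fin 2) (Fin 2) ℝ :=
      !![-G, G * deriv F (1 / L G);
         -φ * deriv L G / L G, -φ * L G]
    (-G - φ * L G < 0) ∧
      ∀ b : ℝ, b ≠ 0 →
        ¬((J.map (fun x : ℝ => (x : ℂ))).charpoly.IsRoot (Complex.I * b)) :=
  no_hopf_bifurcation_general e₁ p₁ e₃ φ δ G he₃ hφ hδ hG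
end
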